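/- arXiv:2110.12132 — 2 statements merged into one kernel-verified Lean document; each statement's English description precedes it below -/
import Mathlib

section
/- If π is a design with M(π) invertible and max_{1≤i≤k} φ_iᵀ M(π)⁻¹ φ_i = d, then π is D-optimal, i.e. det M(π) ≥ det M(π') for every design π'. -/
open Matrix BigOperators

/-- A design is a probability vector over the `k` candidate points. -/
def IsDesign {k : ℕ} (π : Fin k → ℝ) : Prop :=
  (∀ i, 0 ≤ π i) ∧ ∑ i, π i = 1

/-- The information matrix `M(π) = ∑ i, π i • φ i φ iᵀ` of a design. -/
noncomputable def infoMatrix {d k : ℕ} (φ : Fin k → (Fin d → ℝ)) (π : Fin k → ℝ) :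
    Matrix (Fin d) (Fin d) ℝ :=
  ∑ i, π i • vecMulVec (φ i) (φ i)

/-!
Factor `M(π)⁻¹ = Cᴴ C`. The leverage bound gives
`tr (C M(π') Cᴴ) = ∑ i, π' i * φ iᵀ M(π)⁻¹ φ i ≤ d`, and AM-GM on the eigenvalues of the
positive semidefinite matrix `C M(π') Cᴴ` turns this into
`det M(π') / det M(π) = det (C M(π') Cᴴ) ≤ (tr (C M(π') Cᴴ) / d) ^ d ≤ 1`.
-/

theorem Real.prod_le_sum_div_card_pow {ι : Type*} (s : Finset ι) {z : ι → ℝ}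
    (hz : ∀ i ∈ s, 0 ≤ z i) : ∏ i ∈ s, z i ≤ ((∑ i ∈ s, z i) / s.card) ^ s.card := by
  rcases s.eq_empty_or_nonempty with rfl | hs
  · simp
  have hcard : s.card ≠ 0 := hs.card_pos.ne'
  have hamgm : ∏ i ∈ s, z i ^ ((s.card : ℝ)⁻¹) ≤ ∑ i ∈ s, (s.card : ℝ)⁻¹ * z i :=
    Real.geom_mean_le_arith_mean_weighted s _ z (fun _ _ => by positivity)
      (by simp [hcard]) hz
  rw [Real.finsetProd_rpow s z hz, ← Finset.mul_sum, inv_mul_eq_div] at hamgm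
  calc ∏ i ∈ s, z i = ((∏ i ∈ s, z i) ^ ((s.card : ℝ)⁻¹)) ^ s.card :=
        (Real.rpow_inv_natCast_pow (Finset.prod_nonneg hz) hcard).symm
    _ ≤ ((∑ i ∈ s, z i) / s.card) ^ s.card := by
        gcongr
        exact Real.rpow_nonneg (Finset.prod_nonneg hz) _

namespace Matrix

open scoped MatrixOrder

variable {n : Type*} [Fintype n] [DecidableEq n]

theorem PosSemidef.det_le_trace_div_card_pow {A : Matrix n n ℝ} (hA : A.PosSemidef) :
    A.det ≤ (A.trace / Fintype.card n) ^ Fintype.card n := by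
  have hdet : A.det = ∏ i, hA.1.eigenvalues i := by simpa using hA.1.det_eq_prod_eigenvalues
  have htr : A.trace = ∑ i, hA.1.eigenvalues i := by simpa using hA.1.trace_eq_sum_eigenvalues
  rw [hdet, htr]
  exact Real.prod_le_sum_div_card_pow Finset.univ fun i _ => hA.eigenvalues_nonneg i

theorem PosDef.det_le_det_of_trace_inv_mul_le_card {A B : Matrix n n ℝ} (hA : A.PosDef)
    (hB : B.PosSemidef) (htr : (A⁻¹ * B).trace ≤ Fintype.card n) : B.det ≤ A.det := by
  obtain ⟨C, hC⟩ := CStarAlgebra.nonneg_iff_eq_star_mul_self.mp hA.inv.posSemidef.nonneg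
  have hN : (C * B * Cᴴ).PosSemidef := hB.mul_mul_conjTranspose_same C
  have hNtr : (C * B * Cᴴ).trace = (A⁻¹ * B).trace := by
    rw [trace_mul_cycle, hC, star_eq_conjTranspose]
  have hNdet : (C * B * Cᴴ).det = B.det / A.det := by
    rw [det_mul, det_mul, div_eq_inv_mul, ← Ring.inverse_eq_inv, ← det_nonsing_inv, hC, det_mul,
      star_eq_conjTranspose, det_conjTranspose]
    ring
  have hratio : B.det / A.det ≤ 1 := by
    calc B.det / A.det = (C * B * Cᴴ).det := hNdet.symm
      _ ≤ ((C * B * Cᴴ).trace / Fintype.card n) ^ Fintype.card n := hN.det_le_trace_div_card_pow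
      _ ≤ 1 := pow_le_one₀ (div_nonneg hN.trace_nonneg (Nat.cast_nonneg _))
          (div_le_one_of_le₀ (hNtr ▸ htr) (Nat.cast_nonneg _))
  rwa [div_le_one hA.det_pos] at hratio

end Matrix

theorem trace_mul_infoMatrix {d k : ℕ} (A : Matrix (Fin d) (Fin d) ℝ) (φ : Fin k → (Fin d → ℝ))
    (π : Fin k → ℝ) : (A * infoMatrix φ π).trace = ∑ i, π i * (φ i ⬝ᵥ A *ᵥ φ i) := by
  simp only [infoMatrix, Finset.mul_sum, mul_smul_comm, trace_sum, trace_smul, mul_vecMulVec,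
    trace_vecMulVec, dotProduct_comm (A *ᵥ _), smul_eq_mul]

theorem infoMatrix_posSemidef {d k : ℕ} (φ : Fin k → (Fin d → ℝ)) {π : Fin k → ℝ}
    (hπ : ∀ i, 0 ≤ π i) : (infoMatrix φ π).PosSemidef :=
  posSemidef_sum _ fun i _ => (posSemidef_vecMulVec_self_star (φ i)).smul (hπ i)

theorem max_leverage_eq_dim_D_optimal_general {d k : ℕ}
    (φ : Fin k → (Fin d → ℝ))
    (π : Fin k → ℝ) (hπ : IsDesign π) (hinv : IsUnit (infoMatrix φ π))
    (hg : (⨆ i, φ i ⬝ᵥ (infoMatrix φ π)⁻¹ *ᵥ φ i) = (d : ℝ)) :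
    ∀ π', IsDesign π' → (infoMatrix φ π').det ≤ (infoMatrix φ π).det := by
  intro π' hπ'
  have hM : (infoMatrix φ π).PosDef := (infoMatrix_posSemidef φ hπ.1).posDef_iff_isUnit.mpr hinv
  have hlev : ∀ i, φ i ⬝ᵥ (infoMatrix φ π)⁻¹ *ᵥ φ i ≤ d := fun i =>
    hg ▸ le_ciSup (Set.finite_range fun j => φ j ⬝ᵥ (infoMatrix φ π)⁻¹ *ᵥ φ j).bddAbove i
  refine hM.det_le_det_of_trace_inv_mul_le_card (infoMatrix_posSemidef φ hπ'.1) ?_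
  calc (((infoMatrix φ π)⁻¹ * infoMatrix φ π').trace)
      = ∑ i, π' i * (φ i ⬝ᵥ (infoMatrix φ π)⁻¹ *ᵥ φ i) := trace_mul_infoMatrix _ φ π'
    _ ≤ ∑ i, π' i * d := by gcongr with i; exacts [hπ'.1 i, hlev i]
    _ = Fintype.card (Fin d) := by rw [← Finset.sum_mul, hπ'.2, one_mul, Fintype.card_fin]

theorem max_leverage_eq_dim_D_optimal {d k : ℕ} (hd : 0 < d) (hk : 0 < k)
    (φ : Fin k → (Fin d → ℝ))
    (hspan : Submodule.span ℝ (Set.range φ) = ⊤)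
    (π : Fin k → ℝ) (hπ : IsDesign π) (hinv : IsUnit (infoMatrix φ π))
    (hg : (⨆ i, φ i ⬝ᵥ (infoMatrix φ π)⁻¹ *ᵥ φ i) = (d : ℝ)) :
    ∀ π', IsDesign π' → (infoMatrix φ π').det ≤ (infoMatrix φ π).det :=
  max_leverage_eq_dim_D_optimal_general φ π hπ hinv hg
end

section
/- Directional derivative of the D-optimality objective: let π be a design with M(π) positive definite, let a ∈ {1,…,k}, let e_a be the design putting all mass on a, and define F(t) := log det M((1−t)·π + t·e_a) for t ∈ [0,1). Then F is differentiable at 0 from the right and F'(0) = φ_aᵀ M(π)⁻¹ φ_a − d. -/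
open Matrix BigOperators

/-! The information matrix is affine along the segment from `π` to `e_a`, so
`M((1-t)π + t e_a) = M + t (φ_a φ_aᵀ - M) = M (1 + t M⁻¹(φ_a φ_aᵀ - M))` with `M = M(π)`.
The first-order expansion `det (1 + t C) = 1 + t tr C + O(t²)` gives
`(log det)'(0) = tr (M⁻¹ (φ_a φ_aᵀ - M)) = φ_aᵀ M⁻¹ φ_a - d`. -/

namespace Matrix

variable {n : Type*} [Fintype n]

theorem trace_mul_vecMulVec {R : Type*} [CommSemiring R] (N : Matrix n n R) (u v : n → R) :
    (N * vecMulVec u v).trace = v ⬝ᵥ N *ᵥ u := by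
  rw [mul_vecMulVec, trace_vecMulVec, dotProduct_comm]

variable [DecidableEq n]

section Derivative

variable {𝕜 : Type*} [NontriviallyNormedField 𝕜]

theorem hasDerivAt_det_one_add_smul (C : Matrix n n 𝕜) :
    HasDerivAt (fun t : 𝕜 => (1 + t • C).det) C.trace 0 := by
  set P := (det (1 + (Polynomial.X : Polynomial 𝕜) • C.map Polynomial.C)).divX.divX
  have hexpand : (fun t : 𝕜 => (1 + t • C).det) = fun t => 1 + C.trace * t + P.eval t * t ^ 2 :=
    funext fun t => det_one_add_smul t C
  have hlin : HasDerivAt (fun t : 𝕜 => 1 + C.trace * t) C.trace 0 := by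
    simpa using ((hasDerivAt_id (0 : 𝕜)).const_mul C.trace).const_add 1
  have hquad : HasDerivAt (fun t : 𝕜 => P.eval t * t ^ 2) 0 0 :=
    ((P.hasDerivAt 0).mul (hasDerivAt_pow 2 (0 : 𝕜))).congr_deriv (by simp)
  rw [hexpand]
  exact (hlin.add hquad).congr_deriv (by simp)

theorem hasDerivAt_det_add_smul {M : Matrix n n 𝕜} (hM : IsUnit M.det) (B : Matrix n n 𝕜) :
    HasDerivAt (fun t : 𝕜 => (M + t • B).det) (M.det * (M⁻¹ * B).trace) 0 := by
  have hfactor : ∀ t : 𝕜, M + t • B = M * (1 + t • (M⁻¹ * B)) := fun t => by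
    rw [mul_add, mul_one, Matrix.mul_smul, mul_nonsing_inv_cancel_left _ _ hM]
  simp_rw [hfactor, det_mul]
  exact (hasDerivAt_det_one_add_smul _).const_mul M.det

end Derivative

theorem hasDerivAt_log_det_add_smul {M : Matrix n n ℝ} (hM : M.det ≠ 0) (B : Matrix n n ℝ) :
    HasDerivAt (fun t : ℝ => Real.log (M + t • B).det) (M⁻¹ * B).trace 0 := by
  have h := (hasDerivAt_det_add_smul hM.isUnit B).log (by simpa using hM)
  simpa [hM] using h

end Matrix

section InfoMatrix

variable {d k : ℕ} (φ : Fin k → (Fin d → ℝ))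

theorem infoMatrix_add (π ρ : Fin k → ℝ) :
    infoMatrix φ (π + ρ) = infoMatrix φ π + infoMatrix φ ρ := by
  simp only [infoMatrix, Pi.add_apply, add_smul, Finset.sum_add_distrib]

theorem infoMatrix_smul (c : ℝ) (π : Fin k → ℝ) :
    infoMatrix φ (c • π) = c • infoMatrix φ π := by
  simp only [infoMatrix, Pi.smul_apply, smul_eq_mul, mul_smul, Finset.smul_sum]

theorem infoMatrix_single (a : Fin k) (c : ℝ) :
    infoMatrix φ (Pi.single a c) = c • vecMulVec (φ a) (φ a) := by
  rw [infoMatrix, Finset.sum_eq_single a (fun b _ hb => by simp [hb]) (by simp)]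
  simp

theorem infoMatrix_lineMap_single (π : Fin k → ℝ) (a : Fin k) (t : ℝ) :
    infoMatrix φ ((1 - t) • π + t • (Pi.single a 1 : Fin k → ℝ)) =
      infoMatrix φ π + t • (vecMulVec (φ a) (φ a) - infoMatrix φ π) := by
  rw [infoMatrix_add, infoMatrix_smul, infoMatrix_smul, infoMatrix_single, one_smul,
    sub_smul, one_smul, smul_sub]
  abel

end InfoMatrix

theorem logdet_directional_derivative_general {d k : ℕ}
    (φ : Fin k → (Fin d → ℝ))
    (π : Fin k → ℝ) (hM : (infoMatrix φ π).PosDef)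
    (a : Fin k) :
    HasDerivWithinAt
      (fun t : ℝ =>
        Real.log (infoMatrix φ ((1 - t) • π + t • (Pi.single a 1 : Fin k → ℝ))).det)
      (φ a ⬝ᵥ (infoMatrix φ π)⁻¹ *ᵥ φ a - (d : ℝ)) (Set.Ici 0) 0 := by
  set M := infoMatrix φ π
  have hdet : M.det ≠ 0 := hM.det_pos.ne'
  have htrace : (M⁻¹ * (vecMulVec (φ a) (φ a) - M)).trace = φ a ⬝ᵥ M⁻¹ *ᵥ φ a - d := by
    rw [mul_sub, trace_sub, trace_mul_vecMulVec, nonsing_inv_mul _ hdet.isUnit, trace_one,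
      Fintype.card_fin]
  simp_rw [infoMatrix_lineMap_single, ← htrace]
  exact (hasDerivAt_log_det_add_smul hdet _).hasDerivWithinAt

theorem logdet_directional_derivative {d k : ℕ} (hd : 0 < d) (hk : 0 < k)
    (φ : Fin k → (Fin d → ℝ))
    (hspan : Submodule.span ℝ (Set.range φ) = ⊤)
    (π : Fin k → ℝ) (hπ : IsDesign π) (hM : (infoMatrix φ π).PosDef)
    (a : Fin k) :
    HasDerivWithinAt
      (fun t : ℝ =>
        Real.log (infoMatrix φ ((1 - t) • π + t • (Pi.single a 1 : Fin k → ℝ))).det)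
      (φ a ⬝ᵥ (infoMatrix φ π)⁻¹ *ᵥ φ a - (d : ℝ)) (Set.Ici 0) 0 :=
  logdet_directional_derivative_general φ π hM a
end
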